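/- arXiv:1309.1619 — 2 statements merged into one kernel-verified Lean document; each statement's English description precedes it below -/
import Mathlib

section
/- Let μ be a Radon measure on ℝ with 0 ∈ supp μ that satisfies condition (TC) at x = 0. Let A ⊆ [-1,1] be an interval containing 0, and for δ > 0 and t ≥ δ define h_δ(t) = μ(e^{−(t−δ)}A)/μ(I_{t+δ}) − μ(e^{−(t+δ)}A)/μ(I_{t−δ}). Then for every α > 0, lim_{δ→0} limsup_{T→∞} (1/T)·λ({t ∈ [δ, T] : h_δ(t) ≥ α}) = 0. -/
open MeasureTheory Filter Topology Set
open scoped ENNReal NNReal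

noncomputable section

/-- `I = [-1,1]`. -/
abbrev I01 : Set ℝ := Set.Icc (-1 : ℝ) 1

/-- The window `x + γ·I_t = [x - γe^{-t}, x + γe^{-t}]`. -/
def window (x γ t : ℝ) : Set ℝ := Set.Icc (x - γ * Real.exp (-t)) (x + γ * Real.exp (-t))

/-- The scenery `μ_{x,t}` as a measure on `I = [-1,1]`:
`A ↦ μ(x + e^{-t}A) / μ(x + I_t)`. -/
def sceneryMeasure (μ : Measure ℝ) (x t : ℝ) : Measure I01 :=
  (μ (window x 1 t))⁻¹ • Measure.comap (fun a : I01 => x + Real.exp (-t) * (a : ℝ)) μ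

/-- The scenery `μ_{x,t}` as a Borel probability measure on `I = [-1,1]`
(with an irrelevant junk value if the normalisation fails, which does not
happen when `μ` is Radon and `x ∈ supp μ`, `t ≥ 0`). -/
def scenery (μ : Measure ℝ) (x t : ℝ) : ProbabilityMeasure I01 := by
  classical
  exact if h : IsProbabilityMeasure (sceneryMeasure μ x t) then ⟨_, h⟩
  else ⟨Measure.dirac ⟨0, by norm_num⟩, inferInstance⟩

/-- `x` belongs to the topological support of `μ`. -/
def MemSupp (μ : Measure ℝ) (x : ℝ) : Prop := ∀ ε > 0, 0 < μ (Set.Ioo (x - ε) (x + ε))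

/-- `f` is an orientation-preserving `C¹` diffeomorphism of `ℝ`. -/
def IsOPDiffeo (f : ℝ → ℝ) : Prop :=
  ContDiff ℝ 1 f ∧ Function.Bijective f ∧ ∀ y : ℝ, 0 < deriv f y

/-- The families of distributions `⟨μ⟩_{x,T}` and `⟨ν⟩_{y,T}` are asymptotic:
`⟨μ⟩_{x,T} - ⟨ν⟩_{y,T} → 0` weak-*, i.e. for every continuous `g : M^□ → ℝ`,
`(1/T) ∫_0^T (g(μ_{x,t}) - g(ν_{y,t})) dt → 0` as `T → ∞`. -/
def DistAsymptotic (μ : Measure ℝ) (x : ℝ) (ν : Measure ℝ) (y : ℝ) : Prop :=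
  ∀ g : C(ProbabilityMeasure I01, ℝ),
    Tendsto (fun T : ℝ => (1 / T) * ∫ t in Set.Ioc (0 : ℝ) T,
      (g (scenery μ x t) - g (scenery ν y t))) atTop (𝓝 0)

/-- Condition (TC) at `x`:
`lim_{K→∞} limsup_{γ→1⁺} limsup_{T→∞} (1/T)·λ({t ∈ [0,T] : μ(x+γI_t)/μ(x+I_t) ≥ K}) = 0`. -/
def CondTC (μ : Measure ℝ) (x : ℝ) : Prop :=
  Tendsto (fun K : ℝ =>
      limsup (fun γ : ℝ =>
          limsup (fun T : ℝ =>
              (1 / T) * (volume {t : ℝ | t ∈ Set.Icc (0 : ℝ) T ∧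
                ENNReal.ofReal K ≤ μ (window x γ t) / μ (window x 1 t)}).toReal)
            atTop)
        (𝓝[>] (1 : ℝ)))
    atTop (𝓝 0)

/-!
`logMass μ A s = log (μ(e^{-s}A) + μ(I_s))` is non-increasing in `s`. If `h_δ(t) ≥ α`, it drops
by at least `c = log (1 + α/4)` across `[t - δ, t + δ]`; if it drops by `log 2K` across
`[t - Nδ, t + Nδ]`, then `μ(I_{t-Nδ}) ≥ K μ(I_{t+Nδ})`, so `t + Nδ` is a bad time for (TC) with
`γ = e^{2Nδ}`. Cutting `[t - Nδ, t + Nδ]` into `N` steps of length `2δ`, at most `log 2K / c` of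
them can drop by `c` unless the whole window is bad. Averaging over the `N` translates bounds the
density of `{h_δ ≥ α}` by `2 log 2K / (c N)` plus twice a (TC) density with `γ = e^{2Nδ}`; choose
`K`, then `N`, then `δ`.
-/

theorem limsup_mem_Icc_of_forall_mem_Icc {ι : Type*} {l : Filter ι} [l.NeBot] {f : ι → ℝ}
    (hf : ∀ i, f i ∈ Icc (0 : ℝ) 1) : limsup f l ∈ Icc (0 : ℝ) 1 :=
  ⟨le_limsup_of_frequently_le (Frequently.of_forall fun i => (hf i).1)
      (isBoundedUnder_of ⟨1, fun i => (hf i).2⟩),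
    limsup_le_of_le (isCoboundedUnder_le_of_le l fun i => (hf i).1)
      (Eventually.of_forall fun i => (hf i).2)⟩

theorem one_div_mul_volume_toReal_mem_Icc {S : Set ℝ} {r T : ℝ} (hr : 0 ≤ r)
    (hS : S ⊆ Icc r T) : 1 / T * (volume S).toReal ∈ Icc (0 : ℝ) 1 := by
  have hvol : (volume S).toReal ≤ max (T - r) 0 := by
    rw [← ENNReal.toReal_ofReal', ← Real.volume_Icc]
    exact ENNReal.toReal_mono measure_Icc_lt_top.ne (measure_mono hS)
  rcases le_or_gt T 0 with hT | hT
  · have : (volume S).toReal = 0 :=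
      le_antisymm (hvol.trans (max_le (by linarith) le_rfl)) ENNReal.toReal_nonneg
    simp [this]
  · refine ⟨by positivity, ?_⟩
    rw [one_div, inv_mul_le_iff₀ hT, mul_one]
    exact hvol.trans (max_le (by linarith) hT.le)

open Classical in
theorem Finset.sum_measure_inter_le_of_card_le {α ι : Type*} [MeasurableSpace α]
    (ν : Measure α) (s : Finset ι) {E : ι → Set α} (hE : ∀ i, MeasurableSet (E i)) (S : Set α)
    {M : ℝ≥0∞} (hM : ∀ t ∈ S, ((s.filter (t ∈ E ·)).card : ℝ≥0∞) ≤ M) :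
    ∑ i ∈ s, ν (S ∩ E i) ≤ M * ν S := by
  calc ∑ i ∈ s, ν (S ∩ E i) = ∫⁻ t in S, ∑ i ∈ s, (E i).indicator 1 t ∂ν := by
        rw [lintegral_finsetSum _ fun i _ => measurable_one.indicator (hE i)]
        refine Finset.sum_congr rfl fun i _ => ?_
        rw [lintegral_indicator_one (hE i), Measure.restrict_apply (hE i), Set.inter_comm]
    _ ≤ ∫⁻ _ in S, M ∂ν := setLIntegral_mono measurable_const fun t ht => by
        simpa [Set.indicator_apply] using hM t ht
    _ = M * ν S := setLIntegral_const S M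

theorem Antitone.mul_card_filter_le_sub {g : ℕ → ℝ} (hg : Antitone g) (c : ℝ) (N : ℕ) :
    c * ((Finset.range N).filter (fun i => c ≤ g i - g (i + 1))).card ≤ g 0 - g N := by
  calc c * ((Finset.range N).filter (fun i => c ≤ g i - g (i + 1))).card
      = ∑ _i ∈ (Finset.range N).filter (fun i => c ≤ g i - g (i + 1)), c := by
        rw [Finset.sum_const, nsmul_eq_mul, mul_comm]
    _ ≤ ∑ i ∈ (Finset.range N).filter (fun i => c ≤ g i - g (i + 1)), (g i - g (i + 1)) :=
        Finset.sum_le_sum fun i hi => (Finset.mem_filter.mp hi).2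
    _ ≤ ∑ i ∈ Finset.range N, (g i - g (i + 1)) :=
        Finset.sum_le_sum_of_subset_of_nonneg (Finset.filter_subset _ _)
          fun i _ _ => sub_nonneg.mpr (hg i.le_succ)
    _ = g 0 - g N := Finset.sum_range_sub' g N

theorem Antitone.volume_drop_le {φ : ℝ → ℝ} (hφ : Antitone φ) {c : ℝ} (hc : 0 < c) (L : ℝ)
    {δ : ℝ} (hδ : 0 ≤ δ) (N : ℕ) (a b : ℝ) :
    N * volume {t ∈ Icc a b | c ≤ φ (t - δ) - φ (t + δ)} ≤
      ENNReal.ofReal (L / c) * volume (Icc (a - (N - 1) * δ) (b + (N - 1) * δ)) +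
        N * volume {t ∈ Icc (a - (N - 1) * δ) (b + (N - 1) * δ) |
          L ≤ φ (t - N * δ) - φ (t + N * δ)} := by
  set D := {t ∈ Icc a b | c ≤ φ (t - δ) - φ (t + δ)}
  set J := Icc (a - (N - 1) * δ) (b + (N - 1) * δ)
  set B := {t | L ≤ φ (t - N * δ) - φ (t + N * δ)}
  -- `t ∈ E i` says that the `i`-th of the `N` consecutive steps of length `2δ` from `t - Nδ`
  -- to `t + Nδ` drops by at least `c`
  set E : ℕ → Set ℝ := fun i => {t | c ≤ φ (t + (2 * i - N) * δ) - φ (t + (2 * ↑(i + 1) - N) * δ)}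
  have hE : ∀ i, MeasurableSet (E i) := fun i => by
    have := hφ.measurable
    exact measurableSet_le measurable_const (by fun_prop)
  have hshift : ∀ i < N, volume D ≤ volume ((J \ B) ∩ E i) + volume (J ∩ B) := by
    intro i hi
    have hi' : (i : ℝ) + 1 ≤ N := by exact_mod_cast hi
    have hsub : (· + (2 * i + 1 - N) * δ) ⁻¹' D ⊆ (J \ B) ∩ E i ∪ J ∩ B := by
      rintro u ⟨⟨hua, hub⟩, hu⟩
      have huJ : u ∈ J := ⟨by nlinarith, by nlinarith⟩
      have huE : u ∈ E i := by
        show c ≤ _ - _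
        convert hu using 3 <;> push_cast <;> ring
      by_cases huB : u ∈ B
      exacts [Or.inr ⟨huJ, huB⟩, Or.inl ⟨⟨huJ, huB⟩, huE⟩]
    calc volume D = volume ((· + (2 * i + 1 - N) * δ) ⁻¹' D) :=
          (measure_preimage_add_right _ _ _).symm
      _ ≤ _ := (measure_mono hsub).trans (measure_union_le _ _)
  have hcard : ∀ t ∈ J \ B,
      (((Finset.range N).filter (t ∈ E ·)).card : ℝ≥0∞) ≤ ENNReal.ofReal (L / c) := by
    rintro t ⟨-, htB⟩
    have hg : Antitone fun i : ℕ => φ (t + (2 * i - N) * δ) :=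
      fun i j hij => hφ (by gcongr)
    have htel := hg.mul_card_filter_le_sub c N
    have hends : φ (t + (2 * ↑(0 : ℕ) - N) * δ) - φ (t + (2 * ↑N - N) * δ) < L := by
      rw [show t + (2 * ((0 : ℕ) : ℝ) - N) * δ = t - N * δ by push_cast; ring,
        show t + (2 * (N : ℝ) - N) * δ = t + N * δ by ring]
      exact not_le.mp htB
    rw [← ENNReal.ofReal_natCast]
    exact ENNReal.ofReal_le_ofReal ((le_div_iff₀' hc).mpr (htel.trans hends.le))
  calc (N : ℝ≥0∞) * volume D = ∑ _i ∈ Finset.range N, volume D := by simp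
    _ ≤ ∑ i ∈ Finset.range N, (volume ((J \ B) ∩ E i) + volume (J ∩ B)) :=
        Finset.sum_le_sum fun i hi => hshift i (Finset.mem_range.mp hi)
    _ ≤ ENNReal.ofReal (L / c) * volume (J \ B) + N * volume (J ∩ B) := by
        rw [Finset.sum_add_distrib, Finset.sum_const, Finset.card_range, nsmul_eq_mul]
        gcongr
        exact (Finset.range N).sum_measure_inter_le_of_card_le volume hE (J \ B) hcard
    _ ≤ _ := add_le_add (by gcongr; exact sdiff_subset) le_rfl

theorem one_add_div_four_mul_add_le {x₁ x₂ y₁ y₂ α : ℝ} (hy₂ : 0 < y₂) (hy : y₂ ≤ y₁)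
    (hx₂ : 0 ≤ x₂) (hx : x₂ ≤ x₁) (hxy : x₂ ≤ y₂) (h : α ≤ x₁ / y₂ - x₂ / y₁) :
    (1 + α / 4) * (x₂ + y₂) ≤ x₁ + y₁ := by
  have hy₁ : 0 < y₁ := hy₂.trans_le hy
  rw [div_sub_div _ _ hy₂.ne' hy₁.ne', le_div_iff₀ (by positivity)] at h
  by_contra! hlt
  have hgap : (x₁ - x₂) + (y₁ - y₂) < α / 2 * y₂ := by nlinarith
  have h₁ : (x₁ - x₂) * y₁ < α / 2 * y₂ * y₁ := by nlinarith
  have h₂ : x₂ * (y₁ - y₂) ≤ α / 2 * y₂ * y₁ := by nlinarith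
  nlinarith

theorem window_antitone (x : ℝ) {γ : ℝ} (hγ : 0 ≤ γ) : Antitone (window x γ) := fun s s' h => by
  have : γ * Real.exp (-s') ≤ γ * Real.exp (-s) := by gcongr
  exact Icc_subset_Icc (by linarith) (by linarith)

theorem window_exp_sub (x s s' : ℝ) : window x (Real.exp (s' - s)) s' = window x 1 s := by
  simp only [window, one_mul, ← Real.exp_add, show s' - s + -s' = -s by ring]

theorem MemSupp.measure_window_pos {μ : Measure ℝ} {x : ℝ} (hx : MemSupp μ x) {γ : ℝ}
    (hγ : 1 ≤ γ) (s : ℝ) : 0 < μ (window x γ s) := by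
  refine (hx _ (Real.exp_pos (-s))).trans_le (measure_mono fun y hy => ?_)
  have : Real.exp (-s) ≤ γ * Real.exp (-s) := le_mul_of_one_le_left (Real.exp_pos _).le hγ
  exact ⟨by linarith [hy.1], by linarith [hy.2]⟩

theorem image_exp_neg_mul_subset_window {A : Set ℝ} (hAI : A ⊆ I01) (s : ℝ) :
    (fun a => Real.exp (-s) * a) '' A ⊆ window 0 1 s := by
  rintro _ ⟨a, ha, rfl⟩
  obtain ⟨h₁, h₂⟩ := hAI ha
  have he := Real.exp_pos (-s)
  simp only [window, mem_Icc, one_mul, zero_sub, zero_add]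
  constructor <;> nlinarith

theorem Set.OrdConnected.antitone_image_exp_neg_mul {A : Set ℝ} (hA : A.OrdConnected)
    (hA0 : (0 : ℝ) ∈ A) : Antitone fun s : ℝ => (fun a => Real.exp (-s) * a) '' A := by
  rintro s s' hss _ ⟨a, ha, rfl⟩
  have hr₀ : 0 < Real.exp (s - s') := Real.exp_pos _
  have hr₁ : Real.exp (s - s') ≤ 1 := Real.exp_le_one_iff.mpr (by linarith)
  refine ⟨Real.exp (s - s') * a, ?_, show Real.exp (-s) * (Real.exp (s - s') * a) = _ by
    rw [← mul_assoc, ← Real.exp_add, show -s + (s - s') = -s' by ring]⟩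
  rcases le_total 0 a with ha0 | ha0
  · exact hA.out hA0 ha ⟨by positivity, by nlinarith⟩
  · exact hA.out ha hA0 ⟨by nlinarith, by nlinarith⟩

def scaledMass (μ : Measure ℝ) (A : Set ℝ) (s : ℝ) : ℝ :=
  (μ ((fun a => Real.exp (-s) * a) '' A)).toReal

def windowMass (μ : Measure ℝ) (s : ℝ) : ℝ := (μ (window 0 1 s)).toReal

def logMass (μ : Measure ℝ) (A : Set ℝ) (s : ℝ) : ℝ :=
  Real.log (scaledMass μ A s + windowMass μ s)

def hSet (μ : Measure ℝ) (A : Set ℝ) (α δ T : ℝ) : Set ℝ :=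
  {t : ℝ | t ∈ Set.Icc δ T ∧
    α ≤ (μ ((fun a => Real.exp (-(t - δ)) * a) '' A)).toReal / (μ (window 0 1 (t + δ))).toReal
      - (μ ((fun a => Real.exp (-(t + δ)) * a) '' A)).toReal / (μ (window 0 1 (t - δ))).toReal}

def hDensity (μ : Measure ℝ) (A : Set ℝ) (α δ T : ℝ) : ℝ :=
  1 / T * (volume (hSet μ A α δ T)).toReal

def tcSet (μ : Measure ℝ) (x K γ T : ℝ) : Set ℝ :=
  {t : ℝ | t ∈ Set.Icc (0 : ℝ) T ∧ ENNReal.ofReal K ≤ μ (window x γ t) / μ (window x 1 t)}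

def tcDensity (μ : Measure ℝ) (x K γ T : ℝ) : ℝ :=
  1 / T * (volume (tcSet μ x K γ T)).toReal

theorem CondTC.exists_eventually_tcDensity_lt {μ : Measure ℝ} {x : ℝ} (hTC : CondTC μ x)
    {η : ℝ} (hη : 0 < η) :
    ∃ K, 1 ≤ K ∧ ∃ γ₀ > 1, ∀ γ ∈ Ioo 1 γ₀, ∀ᶠ T in atTop, tcDensity μ x K γ T < η := by
  have h01 : ∀ K γ T, tcDensity μ x K γ T ∈ Icc (0 : ℝ) 1 := fun _ _ _ =>
    one_div_mul_volume_toReal_mem_Icc le_rfl fun _ ht => ht.1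
  obtain ⟨K, hK, hK1⟩ := ((hTC.eventually_lt_const hη).and (eventually_ge_atTop 1)).exists
  obtain ⟨γ₀, hγ₀, hγ₀K⟩ := (nhdsGT_basis (1 : ℝ)).eventually_iff.mp <|
    eventually_lt_of_limsup_lt hK <| isBoundedUnder_of
      ⟨1, fun γ => (limsup_mem_Icc_of_forall_mem_Icc (h01 K γ)).2⟩
  exact ⟨K, hK1, γ₀, hγ₀, fun γ hγ =>
    eventually_lt_of_limsup_lt (hγ₀K hγ) (isBoundedUnder_of ⟨1, fun T => (h01 K γ T).2⟩)⟩

section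

variable {μ : Measure ℝ} [IsLocallyFiniteMeasure μ] {A : Set ℝ}

theorem windowMass_pos (h0 : MemSupp μ 0) (s : ℝ) : 0 < windowMass μ s :=
  ENNReal.toReal_pos (h0.measure_window_pos le_rfl s).ne' measure_Icc_lt_top.ne

theorem windowMass_antitone : Antitone (windowMass μ) := fun _ _ h =>
  ENNReal.toReal_mono measure_Icc_lt_top.ne (measure_mono (window_antitone 0 zero_le_one h))

theorem scaledMass_le_windowMass (hAI : A ⊆ I01) (s : ℝ) : scaledMass μ A s ≤ windowMass μ s :=
  ENNReal.toReal_mono measure_Icc_lt_top.ne (measure_mono (image_exp_neg_mul_subset_window hAI s))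

theorem scaledMass_antitone (hAI : A ⊆ I01) (hA0 : (0 : ℝ) ∈ A) (hA : A.OrdConnected) :
    Antitone (scaledMass μ A) := fun s _ h =>
  ENNReal.toReal_mono (measure_ne_top_of_subset (image_exp_neg_mul_subset_window hAI s)
    measure_Icc_lt_top.ne) (measure_mono (hA.antitone_image_exp_neg_mul hA0 h))

theorem scaledMass_add_windowMass_pos (h0 : MemSupp μ 0) (s : ℝ) :
    0 < scaledMass μ A s + windowMass μ s :=
  add_pos_of_nonneg_of_pos ENNReal.toReal_nonneg (windowMass_pos h0 s)

theorem logMass_antitone (h0 : MemSupp μ 0) (hAI : A ⊆ I01) (hA0 : (0 : ℝ) ∈ A)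
    (hA : A.OrdConnected) : Antitone (logMass μ A) := fun _ _ h =>
  Real.log_le_log (scaledMass_add_windowMass_pos h0 _)
    (add_le_add (scaledMass_antitone hAI hA0 hA h) (windowMass_antitone h))

theorem log_le_logMass_sub_of_mem_hSet (h0 : MemSupp μ 0) (hAI : A ⊆ I01) (hA0 : (0 : ℝ) ∈ A)
    (hA : A.OrdConnected) {α δ T t : ℝ} (hα : 0 < α) (hδ : 0 ≤ δ) (ht : t ∈ hSet μ A α δ T) :
    Real.log (1 + α / 4) ≤ logMass μ A (t - δ) - logMass μ A (t + δ) := by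
  have hle : t - δ ≤ t + δ := by linarith
  have key := one_add_div_four_mul_add_le (x₂ := scaledMass μ A (t + δ))
    (windowMass_pos h0 (t + δ)) (windowMass_antitone hle) ENNReal.toReal_nonneg
    (scaledMass_antitone hAI hA0 hA hle) (scaledMass_le_windowMass hAI _) ht.2
  have hpos := scaledMass_add_windowMass_pos (A := A) h0 (t + δ)
  have := Real.log_le_log (by positivity) key
  rw [Real.log_mul (by positivity) hpos.ne'] at this
  simp only [logMass]
  linarith

theorem le_measure_window_div_of_log_le_logMass_sub (h0 : MemSupp μ 0) (hAI : A ⊆ I01)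
    {K s s' : ℝ} (hK : 0 < K) (h : Real.log (2 * K) ≤ logMass μ A s - logMass μ A s') :
    ENNReal.ofReal K ≤ μ (window 0 (Real.exp (s' - s)) s') / μ (window 0 1 s') := by
  have hpos := scaledMass_add_windowMass_pos (A := A) h0 s'
  have hmass :
      2 * K * (scaledMass μ A s' + windowMass μ s') ≤ scaledMass μ A s + windowMass μ s := by
    refine (Real.log_le_log_iff (by positivity) (scaledMass_add_windowMass_pos h0 s)).mp ?_
    rw [Real.log_mul (by positivity) hpos.ne']
    simp only [logMass] at h
    linarith
  -- the factor `2` absorbs `μ(e^{-s}A) ≤ μ(I_s)`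
  have hK' : K * windowMass μ s' ≤ windowMass μ s := by
    have : 0 ≤ K * scaledMass μ A s' := mul_nonneg hK.le ENNReal.toReal_nonneg
    nlinarith [scaledMass_le_windowMass (μ := μ) hAI s]
  rw [window_exp_sub, ENNReal.le_div_iff_mul_le (Or.inl (h0.measure_window_pos le_rfl s').ne')
    (Or.inl measure_Icc_lt_top.ne), ← ENNReal.ofReal_toReal (a := μ (window 0 1 s'))
    measure_Icc_lt_top.ne, ← ENNReal.ofReal_toReal (a := μ (window 0 1 s)) measure_Icc_lt_top.ne,
    ← ENNReal.ofReal_mul hK.le]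
  exact ENNReal.ofReal_le_ofReal hK'

theorem volume_hSet_le (h0 : MemSupp μ 0) (hAI : A ⊆ I01) (hA0 : (0 : ℝ) ∈ A)
    (hA : A.OrdConnected) {α K δ : ℝ} (hα : 0 < α) (hK : 0 < K) (hδ : 0 ≤ δ) (N : ℕ) (T : ℝ) :
    N * volume (hSet μ A α δ T) ≤
      ENNReal.ofReal (Real.log (2 * K) / Real.log (1 + α / 4)) *
          volume (Icc (δ - (N - 1) * δ) (T + (N - 1) * δ)) +
        N * volume (tcSet μ 0 K (Real.exp (2 * N * δ)) (T + 2 * N * δ)) := by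
  have hc : 0 < Real.log (1 + α / 4) := Real.log_pos (by linarith)
  have htc : volume {t ∈ Icc (δ - (N - 1) * δ) (T + (N - 1) * δ) |
      Real.log (2 * K) ≤ logMass μ A (t - N * δ) - logMass μ A (t + N * δ)} ≤
      volume (tcSet μ 0 K (Real.exp (2 * N * δ)) (T + 2 * N * δ)) := by
    have hsub : {t ∈ Icc (δ - (N - 1) * δ) (T + (N - 1) * δ) |
        Real.log (2 * K) ≤ logMass μ A (t - N * δ) - logMass μ A (t + N * δ)} ⊆
        (· + N * δ) ⁻¹' tcSet μ 0 K (Real.exp (2 * N * δ)) (T + 2 * N * δ) := by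
      rintro t ⟨⟨ht₁, ht₂⟩, ht⟩
      refine ⟨⟨by nlinarith, by nlinarith⟩, ?_⟩
      have := le_measure_window_div_of_log_le_logMass_sub h0 hAI hK ht
      rwa [show t + N * δ - (t - N * δ) = 2 * N * δ by ring] at this
    exact (measure_mono hsub).trans_eq (measure_preimage_add_right _ _ _)
  calc (N : ℝ≥0∞) * volume (hSet μ A α δ T)
      ≤ N * volume {t ∈ Icc δ T |
          Real.log (1 + α / 4) ≤ logMass μ A (t - δ) - logMass μ A (t + δ)} := by
        gcongr
        exact fun t ht => ⟨ht.1, log_le_logMass_sub_of_mem_hSet h0 hAI hA0 hA hα hδ ht⟩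
    _ ≤ _ := (logMass_antitone h0 hAI hA0 hA).volume_drop_le hc _ hδ N δ T
    _ ≤ _ := by gcongr

theorem hDensity_le (h0 : MemSupp μ 0) (hAI : A ⊆ I01) (hA0 : (0 : ℝ) ∈ A)
    (hA : A.OrdConnected) {α K δ T : ℝ} (hα : 0 < α) (hK : 1 ≤ K) {N : ℕ} (hN : 0 < N)
    (hδ : 0 < δ) (hT : 2 * N * δ ≤ T) :
    hDensity μ A α δ T ≤ 2 * (Real.log (2 * K) / Real.log (1 + α / 4)) / N +
      2 * tcDensity μ 0 K (Real.exp (2 * N * δ)) (T + 2 * N * δ) := by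
  set M := Real.log (2 * K) / Real.log (1 + α / 4)
  set d := tcDensity μ 0 K (Real.exp (2 * N * δ)) (T + 2 * N * δ)
  have hM : 0 ≤ M := div_nonneg (Real.log_nonneg (by linarith))
    (Real.log_nonneg (by linarith))
  have hN' : (0 : ℝ) < N := Nat.cast_pos.mpr hN
  have hNδ : 0 < 2 * N * δ := by positivity
  have hTpos : 0 < T := hNδ.trans_le hT
  have hd : 0 ≤ d := (one_div_mul_volume_toReal_mem_Icc le_rfl fun t ht => ht.1).1
  have htc : volume (tcSet μ 0 K (Real.exp (2 * N * δ)) (T + 2 * N * δ)) =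
      ENNReal.ofReal ((T + 2 * N * δ) * d) := by
    rw [← ENNReal.ofReal_toReal (measure_ne_top_of_subset (fun t ht => ht.1)
      measure_Icc_lt_top.ne)]
    congr 1
    simp only [d, tcDensity]
    field_simp
  have hJ : volume (Icc (δ - (N - 1) * δ) (T + (N - 1) * δ)) ≤ ENNReal.ofReal (2 * T) := by
    rw [Real.volume_Icc]
    exact ENNReal.ofReal_le_ofReal (by nlinarith)
  have hvol : N * (volume (hSet μ A α δ T)).toReal ≤ M * (2 * T) + N * ((T + 2 * N * δ) * d) := by
    have : N * volume (hSet μ A α δ T) ≤ ENNReal.ofReal M * ENNReal.ofReal (2 * T) +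
        N * ENNReal.ofReal ((T + 2 * N * δ) * d) :=
      (volume_hSet_le h0 hAI hA0 hA hα (by linarith : (0 : ℝ) < K) hδ.le N T).trans
        (by rw [htc]; gcongr)
    rw [← ENNReal.ofReal_mul hM, ← ENNReal.ofReal_natCast, ← ENNReal.ofReal_mul
      hN'.le, ← ENNReal.ofReal_add (by positivity) (by positivity)] at this
    simpa only [ENNReal.toReal_mul, ENNReal.toReal_ofReal hN'.le] using
      ENNReal.toReal_le_of_le_ofReal (by positivity) this
  have hd2 : (T + 2 * N * δ) * d ≤ 2 * T * d := by gcongr; linarith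
  have hrhs : (N : ℝ) * (T * (2 * M / N + 2 * d)) = M * (2 * T) + N * (2 * T * d) := by
    field_simp
  rw [hDensity, one_div, inv_mul_le_iff₀ hTpos]
  refine le_of_mul_le_mul_left ?_ hN'
  nlinarith

end

/-- Lemma (hdeltalemma): suppose `μ` has `0 ∈ supp μ` and satisfies (TC) at `0`.
Let `A ⊆ I` be an interval containing `0`, and for `δ > 0` let
`h_δ(t) = μ(A_{t-δ})/μ(I_{t+δ}) - μ(A_{t+δ})/μ(I_{t-δ})`.  Then for every `α > 0`,
`lim_{δ→0⁺} limsup_{T→∞} (1/T)·λ({t ∈ [δ,T] : h_δ(t) ≥ α}) = 0`. -/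
theorem hdelta_lemma (μ : Measure ℝ) [IsLocallyFiniteMeasure μ]
    (h0 : MemSupp μ 0) (hTC : CondTC μ 0)
    (A : Set ℝ) (hAI : A ⊆ I01) (hA0 : (0 : ℝ) ∈ A) (hAint : A.OrdConnected)
    (α : ℝ) (hα : 0 < α) :
    Tendsto (fun δ : ℝ =>
        limsup (fun T : ℝ =>
            (1 / T) * (volume {t : ℝ | t ∈ Set.Icc δ T ∧
              α ≤ (μ ((fun a => Real.exp (-(t - δ)) * a) '' A)).toReal /
                    (μ (window 0 1 (t + δ))).toReal
                - (μ ((fun a => Real.exp (-(t + δ)) * a) '' A)).toReal /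
                    (μ (window 0 1 (t - δ))).toReal}).toReal)
          atTop)
      (𝓝[>] (0 : ℝ)) (𝓝 0) := by
  change Tendsto (fun δ => limsup (hDensity μ A α δ) atTop) (𝓝[>] 0) (𝓝 0)
  rw [Metric.tendsto_nhds]
  intro ε hε
  obtain ⟨K, hK1, γ₀, hγ₀, hTCK⟩ := hTC.exists_eventually_tcDensity_lt (by positivity : 0 < ε / 8)
  set M := Real.log (2 * K) / Real.log (1 + α / 4)
  have hM : 0 ≤ M := div_nonneg (Real.log_nonneg (by linarith)) (Real.log_nonneg (by linarith))
  obtain ⟨N, hN⟩ := exists_nat_gt (8 * M / ε)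
  have hN0 : (0 : ℝ) < N := lt_of_le_of_lt (by positivity) hN
  have hMN : 2 * M / N ≤ ε / 4 := by
    rw [div_lt_iff₀ hε] at hN
    rw [div_le_iff₀ hN0]
    linarith
  have hγ₀' := Real.log_pos hγ₀
  filter_upwards [Ioo_mem_nhdsGT (by positivity : 0 < Real.log γ₀ / (2 * N))] with δ ⟨hδ, hδγ⟩
  have hγ : Real.exp (2 * N * δ) ∈ Ioo 1 γ₀ := by
    rw [lt_div_iff₀ (by positivity)] at hδγ
    exact ⟨Real.one_lt_exp_iff.mpr (by positivity), (Real.lt_log_iff_exp_lt (by linarith)).mp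
      (by linarith)⟩
  have htc : ∀ᶠ T in atTop, tcDensity μ 0 K (Real.exp (2 * N * δ)) (T + 2 * N * δ) < ε / 8 :=
    (tendsto_atTop_add_const_right _ _ tendsto_id).eventually (hTCK _ hγ)
  have hdens : ∀ᶠ T in atTop, hDensity μ A α δ T ≤ ε / 2 := by
    filter_upwards [eventually_ge_atTop (2 * N * δ), htc] with T hT hTtc
    linarith [hDensity_le h0 hAI hA0 hAint hα hK1 (Nat.cast_pos.mp hN0) hδ hT]
  have h01 : ∀ T, hDensity μ A α δ T ∈ Icc (0 : ℝ) 1 := fun _ =>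
    one_div_mul_volume_toReal_mem_Icc hδ.le fun _ ht => ht.1
  rw [Real.dist_eq, sub_zero, abs_of_nonneg (limsup_mem_Icc_of_forall_mem_Icc h01).1]
  linarith [limsup_le_of_le (isCoboundedUnder_le_of_le atTop fun T => (h01 T).1) hdens]
end
end

section
/- Let μ be the measure on ℝ with density g(x) = x^{−2}·e^{−1/|x|} for x ≠ 0 (and g(0) = 0) with respect to Lebesgue measure, so that μ([0,x]) = μ([−x,0]) = e^{−1/x} for x > 0. Then 0 ∈ supp μ and lim_{t→∞} μ_{0,t} = (1/2)(δ_{−1} + δ_1) in the weak-* topology. -/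
/-!
On `[0, ∞)` the measure `μ = volume.withDensity gdens` has distribution function
`expNegInvGlue : x ↦ e^{-1/x}`, and `μ` is symmetric. Hence, with `r = e^{-t}`, the scenery
`μ_{0,t}` gives mass `1/2` to each of `[0, 1]` and `[-1, 0)`, while `[0, s]` and `[-s, 0]` get mass
`e^{-(1/s - 1)/r} / 2 → 0` for `s < 1`. So each half of `μ_{0,t}` concentrates at its endpoint
`±1`, and a family of finite measures whose mass tends to `c` and which concentrates at `x₀`
integrates a bounded continuous `φ` to `c φ(x₀)` in the limit.
-/

open MeasureTheory Filter Topology Set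
open scoped ENNReal NNReal

noncomputable section

/-- The density `g(x) = x⁻²·e^{-1/|x|}` (with `g(0) = 0`). -/
def gdens (x : ℝ) : ℝ≥0∞ :=
  if x = 0 then 0 else ENNReal.ofReal ((x ^ 2)⁻¹ * Real.exp (-(1 / |x|)))

open BoundedContinuousFunction

section Concentration

variable {X ι : Type*} [TopologicalSpace X] [MeasurableSpace X] [OpensMeasurableSpace X]

theorem abs_integral_sub_measureReal_mul_le {ν : Measure X} [IsFiniteMeasure ν] (φ : X →ᵇ ℝ)
    {x₀ : X} {U : Set X} (hU : MeasurableSet U)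
    {δ : ℝ} (hδ : 0 ≤ δ) (hφU : ∀ x ∈ U, |φ x - φ x₀| ≤ δ) :
    |∫ x, φ x ∂ν - ν.real univ * φ x₀| ≤ δ * ν.real univ + 2 * ‖φ‖ * ν.real Uᶜ := by
  have hpt : ∀ x, ‖φ x - φ x₀‖ ≤ δ + 2 * ‖φ‖ * Uᶜ.indicator 1 x := by
    intro x
    by_cases hx : x ∈ U
    · simpa [hx] using hφU x hx
    · simpa [hx, ← Real.dist_eq] using (φ.dist_le_two_norm x x₀).trans (le_add_of_nonneg_left hδ)
  have hind : Integrable (fun x ↦ 2 * ‖φ‖ * Uᶜ.indicator 1 x) ν :=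
    ((integrable_const (1 : ℝ)).indicator hU.compl).const_mul _
  calc |∫ x, φ x ∂ν - ν.real univ * φ x₀| = ‖∫ x, (φ x - φ x₀) ∂ν‖ := by
        rw [integral_sub (φ.integrable ν) (integrable_const _), integral_const, smul_eq_mul,
          Real.norm_eq_abs]
    _ ≤ ∫ x, (δ + 2 * ‖φ‖ * Uᶜ.indicator 1 x) ∂ν :=
        norm_integral_le_of_norm_le ((integrable_const δ).add hind) (ae_of_all _ hpt)
    _ = δ * ν.real univ + 2 * ‖φ‖ * ν.real Uᶜ := by
        rw [integral_add (integrable_const δ) hind, integral_const, integral_const_mul,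
          integral_indicator_one hU.compl, smul_eq_mul, mul_comm]

theorem tendsto_integral_of_measureReal_compl_tendsto_zero {l : Filter ι} {ν : ι → Measure X}
    [∀ i, IsFiniteMeasure (ν i)] {x₀ : X} {c : ℝ}
    (hmass : Tendsto (fun i ↦ (ν i).real univ) l (𝓝 c))
    (hconc : ∀ U, IsOpen U → x₀ ∈ U → Tendsto (fun i ↦ (ν i).real Uᶜ) l (𝓝 0))
    (φ : X →ᵇ ℝ) :
    Tendsto (fun i ↦ ∫ x, φ x ∂ν i) l (𝓝 (c * φ x₀)) := by
  suffices h : Tendsto (fun i ↦ ∫ x, φ x ∂ν i - (ν i).real univ * φ x₀) l (𝓝 0) by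
    simpa using h.add (hmass.mul_const (φ x₀))
  refine Metric.tendsto_nhds.2 fun θ hθ ↦ ?_
  set δ := θ / (2 * (|c| + 1))
  have hδ : 0 < δ := by positivity
  have hδc : δ * c + 2 * ‖φ‖ * 0 < θ := by
    have : δ * (|c| + 1) = θ / 2 := by simp only [δ]; field_simp
    nlinarith [le_abs_self c]
  set U := {x | dist (φ x) (φ x₀) < δ}
  have hU : IsOpen U := isOpen_lt (by fun_prop) continuous_const
  have hbound := (hmass.const_mul δ).add ((hconc U hU (by simpa [U] using hδ)).const_mul (2 * ‖φ‖))
  filter_upwards [hbound.eventually_lt_const hδc] with i hi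
  rw [Real.dist_0_eq_abs]
  refine (abs_integral_sub_measureReal_mul_le φ hU.measurableSet hδ.le fun x hx ↦ ?_).trans_lt hi
  rw [← Real.dist_eq]
  exact le_of_lt hx

end Concentration

local notation "μ₀" => volume.withDensity gdens

theorem hasDerivAt_expNegInvGlue (x : ℝ) :
    HasDerivAt expNegInvGlue (x⁻¹ ^ 2 * expNegInvGlue x) x := by
  simpa using expNegInvGlue.hasDerivAt_polynomial_eval_inv_mul 1 x

-- `x⁻¹ ^ 2` vanishes at `0` (as `0⁻¹ = 0`), which absorbs the case split in `gdens`.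
theorem gdens_eq_ofReal (x : ℝ) : gdens x = ENNReal.ofReal (x⁻¹ ^ 2 * expNegInvGlue |x|) := by
  rcases eq_or_ne x 0 with rfl | hx
  · simp [gdens]
  · simp [gdens, hx, expNegInvGlue, inv_pow]

theorem gdens_neg (x : ℝ) : gdens (-x) = gdens x := by
  simp [gdens_eq_ofReal]

theorem withDensity_gdens_neg (s : Set ℝ) : μ₀ (-s) = μ₀ s := by
  rw [withDensity_apply', withDensity_apply', show -s = Neg.neg ⁻¹' s from rfl]
  simpa [gdens_neg] using (Measure.measurePreserving_neg volume).setLIntegral_comp_preimage_emb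
    (Homeomorph.neg ℝ).measurableEmbedding gdens s

theorem withDensity_gdens_Icc_zero {b : ℝ} (hb : 0 ≤ b) :
    μ₀ (Icc 0 b) = ENNReal.ofReal (expNegInvGlue b) := by
  have hcont : Continuous fun x : ℝ ↦ x⁻¹ ^ 2 * expNegInvGlue x := by
    refine (expNegInvGlue.continuous_polynomial_eval_inv_mul (Polynomial.X ^ 2)).congr fun x ↦ ?_
    simp
  have hnonneg : ∀ x, 0 ≤ x⁻¹ ^ 2 * expNegInvGlue x := fun x ↦
    mul_nonneg (sq_nonneg _) (expNegInvGlue.nonneg x)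
  rw [withDensity_apply _ measurableSet_Icc,
    setLIntegral_congr_fun measurableSet_Icc fun x hx ↦ by rw [gdens_eq_ofReal, abs_of_nonneg hx.1],
    ← ofReal_integral_eq_lintegral_ofReal (hcont.integrableOn_Icc) (ae_of_all _ fun x ↦ hnonneg x),
    integral_Icc_eq_integral_Ioc, ← intervalIntegral.integral_of_le hb,
    intervalIntegral.integral_eq_sub_of_hasDerivAt (fun x _ ↦ hasDerivAt_expNegInvGlue x)
      (hcont.intervalIntegrable 0 b), expNegInvGlue.zero, sub_zero]

theorem withDensity_gdens_Icc_neg_self {b : ℝ} (hb : 0 ≤ b) :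
    μ₀ (Icc (-b) b) = ENNReal.ofReal (2 * expNegInvGlue b) := by
  have hinter : μ₀ (Icc (-b) 0 ∩ Icc 0 b) = 0 := by
    rw [Icc_inter_Icc, max_eq_right (neg_nonpos.2 hb), min_eq_left hb, Icc_self]
    exact withDensity_absolutelyContinuous _ _ (measure_singleton 0)
  have hneg : μ₀ (Icc (-b) 0) = μ₀ (Icc 0 b) := by
    rw [← withDensity_gdens_neg, Set.neg_Icc, neg_zero, neg_neg]
  rw [← Icc_union_Icc_eq_Icc (neg_nonpos.2 hb) hb, measure_union₀ nullMeasurableSet_Icc hinter,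
    hneg, withDensity_gdens_Icc_zero hb, ← ENNReal.ofReal_add (expNegInvGlue.nonneg b)
      (expNegInvGlue.nonneg b), two_mul]

section Scenery

variable (μ : Measure ℝ) (x t : ℝ)

theorem measurableEmbedding_scenery :
    MeasurableEmbedding fun a : I01 ↦ x + Real.exp (-t) * (a : ℝ) :=
  ((Homeomorph.addLeft x).isClosedEmbedding.comp
    ((Homeomorph.mulLeft₀ _ (Real.exp_pos (-t)).ne').isClosedEmbedding.comp
      isClosed_Icc.isClosedEmbedding_subtypeVal)).measurableEmbedding

theorem image_scenery_preimage_Icc {c d : ℝ} (hc : -1 ≤ c) (hd : d ≤ 1) :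
    (fun a : I01 ↦ x + Real.exp (-t) * (a : ℝ)) '' (Subtype.val ⁻¹' Icc c d)
      = Icc (x + Real.exp (-t) * c) (x + Real.exp (-t) * d) := by
  rw [show (fun a : I01 ↦ x + Real.exp (-t) * (a : ℝ))
      = (x + ·) ∘ (Real.exp (-t) * ·) ∘ Subtype.val from rfl, image_comp, image_comp,
    Subtype.image_preimage_coe, inter_eq_right.2 (Icc_subset_Icc hc hd),
    image_mul_left_Icc' (Real.exp_pos _), image_const_add_Icc]

theorem sceneryMeasure_preimage_Icc {c d : ℝ} (hc : -1 ≤ c) (hd : d ≤ 1) :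
    sceneryMeasure μ x t (Subtype.val ⁻¹' Icc c d)
      = μ (Icc (x + Real.exp (-t) * c) (x + Real.exp (-t) * d)) / μ (window x 1 t) := by
  rw [sceneryMeasure, Measure.smul_apply, smul_eq_mul,
    (measurableEmbedding_scenery x t).comap_apply, image_scenery_preimage_Icc x t hc hd,
    ENNReal.div_eq_inv_mul]

theorem isProbabilityMeasure_sceneryMeasure (h₀ : μ (window x 1 t) ≠ 0)
    (htop : μ (window x 1 t) ≠ ∞) : IsProbabilityMeasure (sceneryMeasure μ x t) := by
  constructor
  have hwin : Icc (x + Real.exp (-t) * -1) (x + Real.exp (-t) * 1) = window x 1 t := by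
    rw [window]; ring_nf
  rw [← Subtype.coe_preimage_self, sceneryMeasure_preimage_Icc μ x t le_rfl le_rfl, hwin,
    ENNReal.div_self h₀ htop]

theorem coe_scenery [h : IsProbabilityMeasure (sceneryMeasure μ x t)] :
    (scenery μ x t : Measure I01) = sceneryMeasure μ x t := by
  simp [scenery, h]

end Scenery

theorem withDensity_gdens_window (t : ℝ) :
    μ₀ (window 0 1 t) = ENNReal.ofReal (2 * expNegInvGlue (Real.exp (-t))) := by
  rw [← withDensity_gdens_Icc_neg_self (Real.exp_pos (-t)).le, window]
  simp

instance (t : ℝ) : IsProbabilityMeasure (sceneryMeasure μ₀ 0 t) := by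
  refine isProbabilityMeasure_sceneryMeasure _ 0 t ?_ ?_ <;> rw [withDensity_gdens_window]
  · exact (ENNReal.ofReal_pos.2 (mul_pos two_pos (expNegInvGlue.pos_of_pos (Real.exp_pos _)))).ne'
  · exact ENNReal.ofReal_ne_top

theorem sceneryMeasure_gdens_real_Icc_zero (t : ℝ) {d : ℝ} (hd₀ : 0 ≤ d) (hd₁ : d ≤ 1) :
    (sceneryMeasure μ₀ 0 t).real (Subtype.val ⁻¹' Icc 0 d)
      = expNegInvGlue (Real.exp (-t) * d) / (2 * expNegInvGlue (Real.exp (-t))) := by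
  rw [measureReal_def, sceneryMeasure_preimage_Icc _ 0 t (by linarith) hd₁,
    withDensity_gdens_window]
  simp only [zero_add, mul_zero]
  rw [withDensity_gdens_Icc_zero (by positivity), ENNReal.toReal_div,
    ENNReal.toReal_ofReal (expNegInvGlue.nonneg _),
    ENNReal.toReal_ofReal (mul_nonneg zero_le_two (expNegInvGlue.nonneg _))]

theorem sceneryMeasure_gdens_real_Icc_neg_zero (t : ℝ) {d : ℝ} (hd₀ : 0 ≤ d) (hd₁ : d ≤ 1) :
    (sceneryMeasure μ₀ 0 t).real (Subtype.val ⁻¹' Icc (-d) 0)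
      = expNegInvGlue (Real.exp (-t) * d) / (2 * expNegInvGlue (Real.exp (-t))) := by
  rw [← sceneryMeasure_gdens_real_Icc_zero t hd₀ hd₁, measureReal_def, measureReal_def,
    sceneryMeasure_preimage_Icc _ 0 t (by linarith) (by linarith),
    sceneryMeasure_preimage_Icc _ 0 t (by linarith) hd₁, ← withDensity_gdens_neg, Set.neg_Icc]
  simp

theorem tendsto_expNegInvGlue_exp_neg_mul_div {s : ℝ} (hs₀ : 0 < s) (hs₁ : s < 1) :
    Tendsto (fun t ↦ expNegInvGlue (Real.exp (-t) * s) / (2 * expNegInvGlue (Real.exp (-t))))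
      atTop (𝓝 0) := by
  have hratio : ∀ t, expNegInvGlue (Real.exp (-t) * s) / (2 * expNegInvGlue (Real.exp (-t)))
      = Real.exp (-((s⁻¹ - 1) * Real.exp t)) / 2 := by
    intro t
    have hpos : 0 < Real.exp (-t) * s := by positivity
    simp only [expNegInvGlue, not_le.2 hpos, not_le.2 (Real.exp_pos (-t)), if_false]
    rw [mul_comm 2, ← div_div, ← Real.exp_sub, mul_inv, Real.exp_neg, inv_inv]
    ring_nf
  simp_rw [hratio]
  simpa using (Real.tendsto_exp_neg_atTop_nhds_zero.comp
    (Real.tendsto_exp_atTop.const_mul_atTop (sub_pos.2 (one_lt_inv₀ hs₀ |>.2 hs₁)))).div_const 2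

theorem sceneryMeasure_gdens_real_Icc_zero_one (t : ℝ) :
    (sceneryMeasure μ₀ 0 t).real (Subtype.val ⁻¹' Icc 0 1) = 1 / 2 := by
  rw [sceneryMeasure_gdens_real_Icc_zero t zero_le_one le_rfl, mul_one,
    div_mul_cancel_right₀ (expNegInvGlue.pos_of_pos (Real.exp_pos _)).ne', one_div]

theorem tendsto_integral_sceneryMeasure_gdens_restrict_nonneg (φ : C(I01, ℝ)) :
    Tendsto (fun t ↦ ∫ a, φ a ∂(sceneryMeasure μ₀ 0 t).restrict (Subtype.val ⁻¹' Icc 0 1))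
      atTop (𝓝 (1 / 2 * φ ⟨1, by norm_num⟩)) := by
  refine tendsto_integral_of_measureReal_compl_tendsto_zero ?_ (fun U hU h1 ↦ ?_) (mkOfCompact φ)
  · simp [sceneryMeasure_gdens_real_Icc_zero_one]
  obtain ⟨ε, hε, hball⟩ := Metric.isOpen_iff.1 hU _ h1
  set s := 1 - min ε (1 / 2)
  have hs₀ : 0 < s := by linarith [min_le_right ε (1 / 2)]
  have hs₁ : s < 1 := by linarith [lt_min hε one_half_pos]
  have hsub : Uᶜ ∩ Subtype.val ⁻¹' Icc 0 1 ⊆ Subtype.val ⁻¹' Icc 0 s := by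
    rintro a ⟨haU, ha₀, ha₁⟩
    refine ⟨ha₀, not_lt.1 fun has ↦ haU (hball ?_)⟩
    rw [Metric.mem_ball, Subtype.dist_eq, Real.dist_eq, abs_lt]
    constructor <;> linarith [min_le_left ε (1 / 2)]
  refine squeeze_zero (fun t ↦ measureReal_nonneg) (fun t ↦ ?_)
    (tendsto_expNegInvGlue_exp_neg_mul_div hs₀ hs₁)
  rw [measureReal_restrict_apply hU.measurableSet.compl,
    ← sceneryMeasure_gdens_real_Icc_zero t hs₀.le hs₁.le]
  exact measureReal_mono hsub

theorem tendsto_integral_sceneryMeasure_gdens_restrict_neg (φ : C(I01, ℝ)) :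
    Tendsto (fun t ↦ ∫ a, φ a ∂(sceneryMeasure μ₀ 0 t).restrict (Subtype.val ⁻¹' Icc 0 1)ᶜ)
      atTop (𝓝 (1 / 2 * φ ⟨-1, by norm_num⟩)) := by
  refine tendsto_integral_of_measureReal_compl_tendsto_zero ?_ (fun U hU h1 ↦ ?_) (mkOfCompact φ)
  · refine tendsto_const_nhds.congr fun t ↦ ?_
    rw [measureReal_restrict_apply_univ,
      measureReal_compl (measurableSet_Icc.preimage measurable_subtype_coe),
      sceneryMeasure_gdens_real_Icc_zero_one, probReal_univ]
    norm_num
  obtain ⟨ε, hε, hball⟩ := Metric.isOpen_iff.1 hU _ h1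
  set s := 1 - min ε (1 / 2)
  have hs₀ : 0 < s := by linarith [min_le_right ε (1 / 2)]
  have hs₁ : s < 1 := by linarith [lt_min hε one_half_pos]
  have hsub : Uᶜ ∩ (Subtype.val ⁻¹' Icc 0 1)ᶜ ⊆ Subtype.val ⁻¹' Icc (-s) 0 := by
    rintro a ⟨haU, ha⟩
    have hneg : (a : ℝ) < 0 := not_le.1 fun ha₀ ↦ ha ⟨ha₀, a.2.2⟩
    refine ⟨not_lt.1 fun has ↦ haU (hball ?_), hneg.le⟩
    rw [Metric.mem_ball, Subtype.dist_eq, Real.dist_eq, abs_lt]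
    constructor <;> linarith [min_le_left ε (1 / 2), a.2.1]
  refine squeeze_zero (fun t ↦ measureReal_nonneg) (fun t ↦ ?_)
    (tendsto_expNegInvGlue_exp_neg_mul_div hs₀ hs₁)
  rw [measureReal_restrict_apply hU.measurableSet.compl,
    ← sceneryMeasure_gdens_real_Icc_neg_zero t hs₀.le hs₁.le]
  exact measureReal_mono hsub

theorem memSupp_withDensity_gdens_zero : MemSupp μ₀ 0 := by
  intro ε hε
  refine (ENNReal.ofReal_pos.2 (expNegInvGlue.pos_of_pos (half_pos hε))).trans_le ?_
  rw [← withDensity_gdens_Icc_zero (half_pos hε).le]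
  exact measure_mono (Icc_subset_Ioo (by linarith) (by linarith))

/-- Example 3, first part: for `μ` with density `x⁻²e^{-1/|x|}` one has
`0 ∈ supp μ` and `μ_{0,t} → (1/2)(δ_{-1} + δ_1)` weak-* as `t → ∞`. -/
theorem scenery_tendsto_half_boundary :
    MemSupp (volume.withDensity gdens) 0 ∧
    ∀ φ : C(I01, ℝ),
      Tendsto (fun t : ℝ => ∫ a, φ a ∂(scenery (volume.withDensity gdens) 0 t : Measure I01))
        atTop (𝓝 ((φ ⟨-1, by norm_num⟩ + φ ⟨1, by norm_num⟩) / 2)) := by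
  refine ⟨memSupp_withDensity_gdens_zero, fun φ ↦ ?_⟩
  convert (tendsto_integral_sceneryMeasure_gdens_restrict_nonneg φ).add
    (tendsto_integral_sceneryMeasure_gdens_restrict_neg φ) using 2
  · rw [coe_scenery]
    exact (integral_add_compl (measurableSet_Icc.preimage measurable_subtype_coe)
      ((mkOfCompact φ).integrable _)).symm
  · ring
end
end
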